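/- The differential δ and the product on 𝔄_* satisfy the graded Leibniz rule δ(b_Λ b_Γ) = δ(b_Λ) b_Γ + (−1)^{|∩Λ|} b_Λ δ(b_Γ) whenever Λ and Γ are compatible (so the product b_Λ b_Γ is nonzero). -/

import Mathlib

/-- Generators of 𝔄_*: ordered collections Λ = (λ_1, ..., λ_r) of finite subsets of ℤ_{>0}. -/
abbrev Gen := List (Finset ℕ)

/-- The vector space 𝔄_* spanned over ℚ by the generators `b_Λ`. -/
abbrev 𝔄 := Gen →₀ ℚ

/-- Inversion count `ε(A,B) = Σ_{a∈A} |{b ∈ B : b < a}|`. -/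
def eps (A B : Finset ℕ) : ℕ := ∑ a ∈ A, (B.filter (· < a)).card

/-- The (1-based) rank of `a` in the increasingly ordered finite set `T`. -/
def rankIn (T : Finset ℕ) (a : ℕ) : ℕ := (T.filter (· ≤ a)).card

/-- `⋃Λ`. -/
def unionAll (Λ : Gen) : Finset ℕ := Λ.foldr (· ∪ ·) ∅

/-- `⋂Λ` (with `⋂` of the empty collection taken to be `∅`). -/
def interAll : Gen → Finset ℕ
  | [] => ∅
  | a :: t => t.foldr (· ∩ ·) a

/-- Λ and Γ are compatible if one is empty, or they have the same number of elements and
`(⋃Λ) ∩ (⋃Γ) = ∅`. -/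
def Compatible (Λ Γ : Gen) : Prop :=
  Λ = [] ∨ Γ = [] ∨ (Λ.length = Γ.length ∧ Disjoint (unionAll Λ) (unionAll Γ))

/-- `Λ ⊎ Γ = (λ_1 ∪ γ_1, ..., λ_r ∪ γ_r)`. -/
def uplus : Gen → Gen → Gen
  | [], Γ => Γ
  | Λ, [] => Λ
  | Λ, Γ => List.zipWith (· ∪ ·) Λ Γ

-- The product on generators: `b_Λ b_Γ = (−1)^{ε(∩Λ,∩Γ)} b_{Λ⊎Γ}` if Λ and Γ are
-- compatible, and `0` otherwise.
open Classical in
noncomputable def mulGen (Λ Γ : Gen) : 𝔄 :=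
  if Compatible Λ Γ then
    ((-1 : ℚ) ^ eps (interAll Λ) (interAll Γ)) • Finsupp.single (uplus Λ Γ) 1
  else 0

/-- The bilinear extension of the product to 𝔄_*. -/
noncomputable def mulA : 𝔄 →ₗ[ℚ] 𝔄 →ₗ[ℚ] 𝔄 :=
  Finsupp.lift (𝔄 →ₗ[ℚ] 𝔄) ℚ Gen fun Λ => Finsupp.lift 𝔄 ℚ Gen fun Γ => mulGen Λ Γ

/-- The simplicial differential `δ(b_Λ) = Σ_i (−1)^i b_{(∩Λ ∖ α_i, Λ̂)}`: removing
`α ∈ ⋂Λ` from the intersection replaces each `λ_j` by `λ_j ∖ {α}`. -/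
noncomputable def deltaA : 𝔄 →ₗ[ℚ] 𝔄 :=
  Finsupp.lift 𝔄 ℚ Gen fun Λ =>
    ∑ α ∈ interAll Λ,
      ((-1 : ℚ) ^ rankIn (interAll Λ) α) • Finsupp.single (Λ.map (·.erase α)) 1

/-!
For compatible `Λ, Γ` the intersection of `Λ ⊎ Γ` is the disjoint union `⋂Λ ∪ ⋂Γ`, so the terms
of `δ(b_{Λ⊎Γ})` split into those removing some `α ∈ ⋂Λ` and those removing some `α ∈ ⋂Γ`.
Removing `α` commutes with `⊎`, and the terms match those of `δ(b_Λ) b_Γ` and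
`(-1)^{|⋂Λ|} b_Λ δ(b_Γ)` respectively. For the signs: if `α ∈ ⋂Λ`, both the rank of `α` in
`⋂Λ ∪ ⋂Γ` and `ε(⋂Λ, ⋂Γ)` exceed their counterparts by `#{b ∈ ⋂Γ | b < α}`; if `α ∈ ⋂Γ`, the
corrections `#{a ∈ ⋂Λ | a < α}` (rank) and `#{a ∈ ⋂Λ | α < a}` (inversions) add up to `|⋂Λ|`.
-/

open Finset

lemma sup_inf_sup_of_disjoint {α : Type*} [DistribLattice α] [OrderBot α] {a b c d : α}
    (had : Disjoint a d) (hbc : Disjoint b c) : (a ⊔ b) ⊓ (c ⊔ d) = a ⊓ c ⊔ b ⊓ d := by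
  simp only [inf_sup_left, inf_sup_right, had.eq_bot, hbc.eq_bot, bot_sup_eq, sup_bot_eq]

lemma unionAll_cons (a : Finset ℕ) (Λ : Gen) : unionAll (a :: Λ) = a ∪ unionAll Λ := rfl

lemma interAll_cons_cons (a b : Finset ℕ) (Λ : Gen) :
    interAll (a :: b :: Λ) = a ∩ interAll (b :: Λ) := by
  induction Λ generalizing a b with
  | nil => exact inter_comm b a
  | cons c Λ ih =>
    have hab : b ∩ interAll (a :: Λ) = a ∩ interAll (b :: Λ) := ih a b
    change b ∩ (c ∩ interAll (a :: Λ)) = a ∩ (c ∩ interAll (b :: Λ))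
    rw [inter_left_comm, hab, inter_left_comm]

lemma interAll_subset_unionAll (Λ : Gen) : interAll Λ ⊆ unionAll Λ := by
  induction Λ with
  | nil => exact subset_rfl
  | cons a Λ ih =>
    cases Λ with
    | nil => exact subset_union_left
    | cons b Λ =>
      rw [interAll_cons_cons, unionAll_cons]
      exact inter_subset_left.trans subset_union_left

lemma interAll_map_erase (Λ : Gen) (α : ℕ) :
    interAll (Λ.map (·.erase α)) = (interAll Λ).erase α := by
  induction Λ with
  | nil => rfl
  | cons a Λ ih =>
    cases Λ with
    | nil => rfl
    | cons b Λ =>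
      simp only [List.map_cons] at ih ⊢
      rw [interAll_cons_cons, ih, interAll_cons_cons, erase_inter, inter_erase, erase_idem]

lemma unionAll_map_erase_subset (Λ : Gen) (α : ℕ) :
    unionAll (Λ.map (·.erase α)) ⊆ unionAll Λ := by
  induction Λ with
  | nil => exact subset_rfl
  | cons a Λ ih => exact union_subset_union (erase_subset α a) ih

lemma disjoint_interAll {Λ Γ : Gen} (hd : Disjoint (unionAll Λ) (unionAll Γ)) :
    Disjoint (interAll Λ) (interAll Γ) :=
  hd.mono (interAll_subset_unionAll Λ) (interAll_subset_unionAll Γ)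

lemma interAll_zipWith_union {Λ Γ : Gen} (hlen : Λ.length = Γ.length)
    (hd : Disjoint (unionAll Λ) (unionAll Γ)) :
    interAll (List.zipWith (· ∪ ·) Λ Γ) = interAll Λ ∪ interAll Γ := by
  induction Λ generalizing Γ with
  | nil => cases Γ <;> simp_all [interAll]
  | cons a Λ ih =>
    match Γ, Λ with
    | [], _ => simp at hlen
    | [b], [] => rfl
    | b :: c :: Γ, [] | [b], _ :: _ => simp at hlen
    | b :: c :: Γ, a' :: Λ =>
      rw [unionAll_cons, unionAll_cons] at hd
      rw [List.zipWith_cons_cons, List.zipWith_cons_cons, interAll_cons_cons,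
        ← List.zipWith_cons_cons, ih (by simpa using hlen) (hd.mono subset_union_right
          subset_union_right), interAll_cons_cons, interAll_cons_cons]
      exact sup_inf_sup_of_disjoint
        (hd.mono subset_union_left ((interAll_subset_unionAll _).trans subset_union_right))
        (hd.mono ((interAll_subset_unionAll _).trans subset_union_right) subset_union_left).symm

lemma zipWith_union_map_erase_left {Λ Γ : Gen} {α : ℕ} (h : α ∉ unionAll Γ) :
    List.zipWith (· ∪ ·) (Λ.map (·.erase α)) Γ
      = (List.zipWith (· ∪ ·) Λ Γ).map (·.erase α) := by
  induction Λ generalizing Γ with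
  | nil => simp
  | cons a Λ ih =>
    cases Γ with
    | nil => simp
    | cons b Γ =>
      rw [unionAll_cons, mem_union, not_or] at h
      simp only [List.map_cons, List.zipWith_cons_cons, ih h.2, erase_union_distrib,
        erase_eq_of_notMem h.1]

lemma zipWith_union_map_erase_right {Λ Γ : Gen} {α : ℕ} (h : α ∉ unionAll Λ) :
    List.zipWith (· ∪ ·) Λ (Γ.map (·.erase α))
      = (List.zipWith (· ∪ ·) Λ Γ).map (·.erase α) := by
  rw [List.zipWith_comm_of_comm union_comm, zipWith_union_map_erase_left h,
    List.zipWith_comm_of_comm union_comm]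

lemma uplus_eq_zipWith {Λ Γ : Gen} (hlen : Λ.length = Γ.length) :
    uplus Λ Γ = List.zipWith (· ∪ ·) Λ Γ := by
  match Λ, Γ with
  | [], [] => rfl
  | _ :: _, _ :: _ => rfl

lemma eps_eq_sum_right (I J : Finset ℕ) : eps I J = ∑ b ∈ J, #(I.filter (b < ·)) := by
  simp only [eps, card_filter]
  exact sum_comm

lemma eps_eq_eps_erase_left_add {I J : Finset ℕ} {α : ℕ} (h : α ∈ I) :
    eps I J = eps (I.erase α) J + #(J.filter (· < α)) :=
  (sum_erase_add _ _ h).symm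

lemma eps_eq_eps_erase_right_add {I J : Finset ℕ} {α : ℕ} (h : α ∈ J) :
    eps I J = eps I (J.erase α) + #(I.filter (α < ·)) := by
  rw [eps_eq_sum_right, eps_eq_sum_right, sum_erase_add _ _ h]

lemma rankIn_union {I J : Finset ℕ} (hd : Disjoint I J) (α : ℕ) :
    rankIn (I ∪ J) α = rankIn I α + rankIn J α := by
  rw [rankIn, filter_union, card_union_of_disjoint (disjoint_filter_filter hd)]
  rfl

lemma rankIn_of_notMem {I : Finset ℕ} {α : ℕ} (h : α ∉ I) :
    rankIn I α = #(I.filter (· < α)) := by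
  refine congrArg card (filter_congr fun b hb => ?_)
  exact le_iff_lt_or_eq.trans (or_iff_left (ne_of_mem_of_not_mem hb h))

lemma rankIn_add_card_filter_gt (I : Finset ℕ) (α : ℕ) :
    rankIn I α + #(I.filter (α < ·)) = #I := by
  simp only [rankIn, ← not_le]
  exact card_filter_add_card_filter_not _

lemma mulA_single_single (Λ Γ : Gen) :
    mulA (Finsupp.single Λ 1) (Finsupp.single Γ 1) = mulGen Λ Γ := by
  simp [mulA]

lemma deltaA_single (Λ : Gen) :
    deltaA (Finsupp.single Λ 1) = ∑ α ∈ interAll Λ,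
      ((-1 : ℚ) ^ rankIn (interAll Λ) α) • Finsupp.single (Λ.map (·.erase α)) 1 := by
  simp [deltaA]

lemma deltaA_single_nil : deltaA (Finsupp.single ([] : Gen) 1) = 0 := by
  simp [deltaA_single, interAll]

lemma mulA_single_nil_left (x : 𝔄) : mulA (Finsupp.single [] 1) x = x := by
  suffices mulA (Finsupp.single ([] : Gen) 1) = LinearMap.id from LinearMap.ext_iff.mp this x
  refine Finsupp.lhom_ext' fun Γ => LinearMap.ext_ring ?_
  simp [mulA_single_single, mulGen, Compatible, interAll, eps, uplus]

lemma mulA_single_nil_right (x : 𝔄) : mulA x (Finsupp.single [] 1) = x := by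
  suffices mulA.flip (Finsupp.single ([] : Gen) 1) = LinearMap.id from
    LinearMap.ext_iff.mp this x
  refine Finsupp.lhom_ext' fun Λ => LinearMap.ext_ring ?_
  cases Λ <;> simp [mulA_single_single, mulGen, Compatible, interAll, eps, uplus]

lemma mulGen_of_length_eq {Λ Γ : Gen} (hlen : Λ.length = Γ.length)
    (hd : Disjoint (unionAll Λ) (unionAll Γ)) :
    mulGen Λ Γ = ((-1 : ℚ) ^ eps (interAll Λ) (interAll Γ)) •
      Finsupp.single (List.zipWith (· ∪ ·) Λ Γ) 1 := by
  rw [mulGen, if_pos (show Compatible Λ Γ from Or.inr (Or.inr ⟨hlen, hd⟩)), uplus_eq_zipWith hlen]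

lemma smul_mulGen_map_erase_left {Λ Γ : Gen} (hlen : Λ.length = Γ.length)
    (hd : Disjoint (unionAll Λ) (unionAll Γ)) {α : ℕ} (hα : α ∈ interAll Λ) :
    (-1 : ℚ) ^ rankIn (interAll Λ) α • mulGen (Λ.map (·.erase α)) Γ =
      (-1 : ℚ) ^ eps (interAll Λ) (interAll Γ) •
        (-1 : ℚ) ^ rankIn (interAll Λ ∪ interAll Γ) α •
          Finsupp.single ((List.zipWith (· ∪ ·) Λ Γ).map (·.erase α)) 1 := by
  have hαΓ : α ∉ unionAll Γ := disjoint_left.mp hd (interAll_subset_unionAll Λ hα)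
  have hαJ : α ∉ interAll Γ := fun h => hαΓ (interAll_subset_unionAll Γ h)
  rw [mulGen_of_length_eq (by simpa using hlen) (hd.mono_left (unionAll_map_erase_subset Λ α)),
    interAll_map_erase, zipWith_union_map_erase_left hαΓ, smul_smul, smul_smul, ← pow_add,
    ← pow_add, eps_eq_eps_erase_left_add hα, rankIn_union (disjoint_interAll hd),
    rankIn_of_notMem hαJ, show ∀ e r c : ℕ, e + c + (r + c) = r + e + 2 * c by intros; ring,
    pow_add _ _ (2 * _), (even_two_mul _).neg_one_pow, mul_one]

lemma smul_mulGen_map_erase_right {Λ Γ : Gen} (hlen : Λ.length = Γ.length)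
    (hd : Disjoint (unionAll Λ) (unionAll Γ)) {α : ℕ} (hα : α ∈ interAll Γ) :
    (-1 : ℚ) ^ #(interAll Λ) • (-1 : ℚ) ^ rankIn (interAll Γ) α • mulGen Λ (Γ.map (·.erase α)) =
      (-1 : ℚ) ^ eps (interAll Λ) (interAll Γ) •
        (-1 : ℚ) ^ rankIn (interAll Λ ∪ interAll Γ) α •
          Finsupp.single ((List.zipWith (· ∪ ·) Λ Γ).map (·.erase α)) 1 := by
  have hαΛ : α ∉ unionAll Λ := disjoint_right.mp hd (interAll_subset_unionAll Γ hα)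
  have hαI : α ∉ interAll Λ := fun h => hαΛ (interAll_subset_unionAll Λ h)
  rw [mulGen_of_length_eq (by simpa using hlen) (hd.mono_right (unionAll_map_erase_subset Γ α)),
    interAll_map_erase, zipWith_union_map_erase_right hαΛ, smul_smul, smul_smul, smul_smul,
    ← pow_add, ← pow_add, ← pow_add, eps_eq_eps_erase_right_add hα,
    rankIn_union (disjoint_interAll hd), rankIn_of_notMem hαI, ← rankIn_add_card_filter_gt,
    rankIn_of_notMem hαI]
  ring_nf

/-- The graded Leibniz rule for δ on a nonzero product of generators. -/
theorem stmt13 (Λ Γ : Gen) (h : Compatible Λ Γ) :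
    deltaA (mulA (Finsupp.single Λ 1) (Finsupp.single Γ 1)) =
      mulA (deltaA (Finsupp.single Λ 1)) (Finsupp.single Γ 1)
      + ((-1 : ℚ) ^ (interAll Λ).card) •
          mulA (Finsupp.single Λ 1) (deltaA (Finsupp.single Γ 1)) := by
  rcases h with rfl | rfl | ⟨hlen, hd⟩
  · simp [mulA_single_nil_left, deltaA_single_nil, interAll]
  · simp [mulA_single_nil_right, deltaA_single_nil]
  simp only [mulA_single_single, mulGen_of_length_eq hlen hd, map_smul, deltaA_single,
    interAll_zipWith_union hlen hd, sum_union (disjoint_interAll hd), map_sum,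
    LinearMap.sum_apply, LinearMap.smul_apply, smul_add, smul_sum]
  congr 1
  · exact sum_congr rfl fun α hα => (smul_mulGen_map_erase_left hlen hd hα).symm
  · exact sum_congr rfl fun α hα => (smul_mulGen_map_erase_right hlen hd hα).symm
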